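/- arXiv:2210.07419 — 3 statements merged into one kernel-verified Lean document; each statement's English description precedes it below -/
import Mathlib

section
/- Let C, D be invertible m×m matrices and (A_k), (B_k) matrix sequences. If (P_k, Q_k) are the numerator/denominator sequences of [A_0; B_k/A_k]_{k=1}^n, then C · (Q_n^{-1}P_n) · D equals the n-th convergent of the matrix continued fraction [C A_0 D; (B_1 D)/(A_1 C^{-1}), (B_2 C^{-1})/A_2, B_3/A_3, ..., B_n/A_n], whenever the relevant denominators are invertible. -/
/-!
Both continued fractions share the recurrence from the third step on, and, in the paper's
indexing, `P'ₖ = Pₖ D` and `Q'ₖ = Qₖ C⁻¹` for `k = 1, 2`, because `C⁻¹` cancels the `C` of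
`C A₀ D`. A left-linear recurrence is preserved by right multiplication, so these relations
persist for all `k ≥ 1`, and `Q'ₙ⁻¹ P'ₙ = (Qₙ C⁻¹)⁻¹ Pₙ D = C Qₙ⁻¹ Pₙ D`. The case `n = 0` is
`C A₀ D` on both sides.
-/

section Recurrence

variable {R : Type*} [Ring R]

theorem recurrence_shift {a b X : ℕ → R}
    (h : ∀ k, 1 ≤ k → X (k + 1) = a k * X k + b k * X (k - 1)) (k : ℕ) :
    X (k + 2) = a (k + 1) * X (k + 1) + b (k + 1) * X k := by
  simpa using h (k + 1) (Nat.le_add_left 1 k)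

theorem eq_of_recurrence {a b X Y : ℕ → R} {k₀ : ℕ}
    (hX : ∀ k, k₀ ≤ k → X (k + 2) = a (k + 1) * X (k + 1) + b (k + 1) * X k)
    (hY : ∀ k, k₀ ≤ k → Y (k + 2) = a (k + 1) * Y (k + 1) + b (k + 1) * Y k)
    (h₀ : X k₀ = Y k₀) (h₁ : X (k₀ + 1) = Y (k₀ + 1)) :
    ∀ k, k₀ ≤ k → X k = Y k := by
  suffices h : ∀ k, k₀ ≤ k → X k = Y k ∧ X (k + 1) = Y (k + 1) from fun k hk => (h k hk).1
  intro k hk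
  induction k, hk using Nat.le_induction with
  | base => exact ⟨h₀, h₁⟩
  | succ k hk ih => exact ⟨ih.2, by rw [hX k hk, hY k hk, ih.1, ih.2]⟩

theorem eq_mul_right_of_recurrence {a b X Y : ℕ → R} {k₀ : ℕ} (E : R)
    (hX : ∀ k, k₀ ≤ k → X (k + 2) = a (k + 1) * X (k + 1) + b (k + 1) * X k)
    (hY : ∀ k, k₀ ≤ k → Y (k + 2) = a (k + 1) * Y (k + 1) + b (k + 1) * Y k)
    (h₀ : Y k₀ = X k₀ * E) (h₁ : Y (k₀ + 1) = X (k₀ + 1) * E) :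
    ∀ k, k₀ ≤ k → Y k = X k * E :=
  eq_of_recurrence hY (fun k hk => by simp only [hX k hk, add_mul, mul_assoc]) h₀ h₁

end Recurrence

/-- Indices are shifted by one: `P 0 = P_{-1} = I` and `P (k + 1) = P_k`. -/
theorem matrix_cf_left_right_multiply_general {m : ℕ}
    (C D : Matrix (Fin m) (Fin m) ℝ) (hC : IsUnit C)
    (A B A' B' P Q P' Q' : ℕ → Matrix (Fin m) (Fin m) ℝ) (n : ℕ)
    (hA'0 : A' 0 = C * A 0 * D)
    (hA'1 : A' 1 = A 1 * C⁻¹) (hB'1 : B' 1 = B 1 * D)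
    (hB'2 : B' 2 = B 2 * C⁻¹)
    (hA' : ∀ k, 2 ≤ k → A' k = A k) (hB' : ∀ k, 3 ≤ k → B' k = B k)
    (hP0 : P 0 = 1) (hP1 : P 1 = A 0)
    (hQ0 : Q 0 = 0) (hQ1 : Q 1 = 1)
    (hP : ∀ k, 1 ≤ k → P (k + 1) = A k * P k + B k * P (k - 1))
    (hQ : ∀ k, 1 ≤ k → Q (k + 1) = A k * Q k + B k * Q (k - 1))
    (hP'0 : P' 0 = 1) (hP'1 : P' 1 = A' 0)
    (hQ'0 : Q' 0 = 0) (hQ'1 : Q' 1 = 1)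
    (hP' : ∀ k, 1 ≤ k → P' (k + 1) = A' k * P' k + B' k * P' (k - 1))
    (hQ' : ∀ k, 1 ≤ k → Q' (k + 1) = A' k * Q' k + B' k * Q' (k - 1)) :
    C * ((Q (n + 1))⁻¹ * P (n + 1)) * D = (Q' (n + 1))⁻¹ * P' (n + 1) := by
  obtain _ | n := n
  · simp [hQ1, hQ'1, hP1, hP'1, hA'0, Matrix.mul_assoc]
  have hCdet : IsUnit C.det := (Matrix.isUnit_iff_isUnit_det C).mp hC
  have hP'rec (k : ℕ) (hk : 2 ≤ k) : P' (k + 2) = A (k + 1) * P' (k + 1) + B (k + 1) * P' k := by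
    rw [recurrence_shift hP' k, hA' _ (by omega), hB' _ (by omega)]
  have hQ'rec (k : ℕ) (hk : 2 ≤ k) : Q' (k + 2) = A (k + 1) * Q' (k + 1) + B (k + 1) * Q' k := by
    rw [recurrence_shift hQ' k, hA' _ (by omega), hB' _ (by omega)]
  have hP'2 : P' 2 = P 2 * D := by
    simp only [recurrence_shift hP' 0, recurrence_shift hP 0, hA'1, hB'1, hP'1, hA'0, hP'0, hP1,
      hP0, Matrix.mul_assoc, Matrix.nonsing_inv_mul_cancel_left _ _ hCdet, add_mul, Matrix.mul_one]
  have hP'3 : P' 3 = P 3 * D := by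
    simp only [recurrence_shift hP' 1, recurrence_shift hP 1, hA' 2 le_rfl, hB'2, hP'2, hP'1,
      hA'0, hP1, Matrix.mul_assoc, Matrix.nonsing_inv_mul_cancel_left _ _ hCdet, add_mul]
  have hQ'2 : Q' 2 = Q 2 * C⁻¹ := by
    simp only [recurrence_shift hQ' 0, recurrence_shift hQ 0, hA'1, hB'1, hQ'1, hQ'0, hQ1, hQ0,
      Matrix.mul_zero, Matrix.mul_one, add_zero]
  have hQ'3 : Q' 3 = Q 3 * C⁻¹ := by
    simp only [recurrence_shift hQ' 1, recurrence_shift hQ 1, hA' 2 le_rfl, hB'2, hQ'2, hQ'1,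
      hQ1, Matrix.mul_assoc, Matrix.mul_one, add_mul]
  rw [eq_mul_right_of_recurrence D (fun k _ => recurrence_shift hP k) hP'rec hP'2 hP'3 _ (by omega),
    eq_mul_right_of_recurrence C⁻¹ (fun k _ => recurrence_shift hQ k) hQ'rec hQ'2 hQ'3 _ (by omega),
    Matrix.mul_inv_rev, Matrix.nonsing_inv_nonsing_inv C hCdet]
  simp only [Matrix.mul_assoc]

/-- Proposition 2.2 (i): for invertible `C` and `D`,
`C · (Qₙ⁻¹ Pₙ) · D` is the `n`-th convergent of the matrix continued fraction
`[C A₀ D; (B₁ D)/(A₁ C⁻¹), (B₂ C⁻¹)/A₂, B₃/A₃, …, Bₙ/Aₙ]`.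
Indices are shifted by one, so `P 0 = P_{-1} = I`, `P (k+1) = P_k`, etc. -/
theorem matrix_cf_left_right_multiply {m : ℕ}
    (C D : Matrix (Fin m) (Fin m) ℝ) (hC : IsUnit C) (hD : IsUnit D)
    (A B A' B' P Q P' Q' : ℕ → Matrix (Fin m) (Fin m) ℝ) (n : ℕ)
    (hA'0 : A' 0 = C * A 0 * D)
    (hA'1 : A' 1 = A 1 * C⁻¹) (hB'1 : B' 1 = B 1 * D)
    (hB'2 : B' 2 = B 2 * C⁻¹)
    (hA' : ∀ k, 2 ≤ k → A' k = A k) (hB' : ∀ k, 3 ≤ k → B' k = B k)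
    (hP0 : P 0 = 1) (hP1 : P 1 = A 0)
    (hQ0 : Q 0 = 0) (hQ1 : Q 1 = 1)
    (hP : ∀ k, 1 ≤ k → P (k + 1) = A k * P k + B k * P (k - 1))
    (hQ : ∀ k, 1 ≤ k → Q (k + 1) = A k * Q k + B k * Q (k - 1))
    (hP'0 : P' 0 = 1) (hP'1 : P' 1 = A' 0)
    (hQ'0 : Q' 0 = 0) (hQ'1 : Q' 1 = 1)
    (hP' : ∀ k, 1 ≤ k → P' (k + 1) = A' k * P' k + B' k * P' (k - 1))
    (hQ' : ∀ k, 1 ≤ k → Q' (k + 1) = A' k * Q' k + B' k * Q' (k - 1))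
    (hQn : IsUnit (Q (n + 1))) (hQ'n : IsUnit (Q' (n + 1))) :
    C * ((Q (n + 1))⁻¹ * P (n + 1)) * D = (Q' (n + 1))⁻¹ * P' (n + 1) :=
  matrix_cf_left_right_multiply_general C D hC A B A' B' P Q P' Q' n hA'0 hA'1 hB'1 hB'2 hA' hB' hP0
    hP1 hQ0 hQ1 hP hQ hP'0 hP'1 hQ'0 hQ'1 hP' hQ'
end

section
/- Let λ > 0 with λ ≠ 1, and set φ(λ) = (1-λ)/(1+λ). Then ln(λ) equals the limit of the continued fraction [0; (-2φ(λ))/1, (-φ(λ)²)/3, (-2²φ(λ)²)/5, ..., (-n²φ(λ)²)/(2n+1), ...], i.e., the sequence of its convergents converges to ln(λ). -/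
open Filter

open intervalIntegral Set

noncomputable def Jint (c : ℝ) (n : ℕ) : ℝ := ∫ x in (-1:ℝ)..1, (1-x^2)^n / (1-c*x)^(n+1)
noncomputable def Kint (c : ℝ) (n : ℕ) : ℝ := ∫ x in (-1:ℝ)..1, (1-x^2)^n / (1-c*x)^n

lemma den_pos {c x : ℝ} (hc : |c| < 1) (hx : x ∈ uIcc (-1:ℝ) 1) : 0 < 1 - c*x := by
  have hx' : |x| ≤ 1 := by
    rw [Set.uIcc_of_le (by norm_num : (-1:ℝ) ≤ 1)] at hx
    exact abs_le.mpr ⟨hx.1, hx.2⟩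
  have : |c*x| < 1 := by
    rw [abs_mul]
    calc |c| * |x| ≤ |c| * 1 := by nlinarith [abs_nonneg c]
    _ < 1 := by simpa using hc
  linarith [(abs_lt.mp this).2]

lemma contOn {c : ℝ} (hc : |c| < 1) (m k : ℕ) :
    ContinuousOn (fun x : ℝ => (1-x^2)^m / (1-c*x)^k) (uIcc (-1:ℝ) 1) := by
  apply ContinuousOn.div
  · fun_prop
  · fun_prop
  · intro x hx
    exact pow_ne_zero _ (ne_of_gt (den_pos hc hx))

lemma integrable' {c : ℝ} (hc : |c| < 1) (m k : ℕ) :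
    IntervalIntegrable (fun x : ℝ => (1-x^2)^m / (1-c*x)^k) MeasureTheory.volume (-1) 1 :=
  (contOn hc m k).intervalIntegrable

lemma hasDeriv_quot (c : ℝ) (a b : ℕ) {x : ℝ} (hx : 1 - c*x ≠ 0) :
    HasDerivAt (fun x : ℝ => (1-x^2)^a / (1-c*x)^b)
      (((↑a * (1-x^2)^(a-1) * (-2*x)) * (1-c*x)^b -
        (1-x^2)^a * (↑b * (1-c*x)^(b-1) * (-c))) / ((1-c*x)^b)^2) x := by
  have h1 : HasDerivAt (fun x : ℝ => 1 - x^2) (-2*x) x := by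
    simpa using ((hasDerivAt_pow 2 x).const_sub 1)
  have h2 : HasDerivAt (fun x : ℝ => 1 - c*x) (-c) x := by
    simpa using ((hasDerivAt_id x).const_mul c).const_sub 1
  exact (h1.pow a).div (h2.pow b) (pow_ne_zero _ hx)

lemma I1 {c : ℝ} (hc : |c| < 1) (hc0 : c ≠ 0) (n : ℕ) :
    c^2 * Jint c (n+1) = 2 * Jint c n - 2 * Kint c n := by
  have key : (∫ x in (-1:ℝ)..1, ((n:ℝ)+1)/c *
      (c^2 * ((1-x^2)^(n+1)/(1-c*x)^(n+2)) - 2 * ((1-x^2)^n/(1-c*x)^(n+1))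
        + 2 * ((1-x^2)^n/(1-c*x)^n))) = 0 := by
    have main := integral_eq_sub_of_hasDerivAt
      (f := fun x : ℝ => (1-x^2)^(n+1) / (1-c*x)^(n+1))
      (f' := fun x : ℝ => ((n:ℝ)+1)/c *
        (c^2 * ((1-x^2)^(n+1)/(1-c*x)^(n+2)) - 2 * ((1-x^2)^n/(1-c*x)^(n+1))
          + 2 * ((1-x^2)^n/(1-c*x)^n))) (a := -1) (b := 1) ?_ ?_
    · rw [main]; norm_num
    · intro x hx
      have hden := ne_of_gt (den_pos hc hx)
      have := hasDeriv_quot c (n+1) (n+1) hden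
      refine this.congr_deriv ?_
      simp only [Nat.add_sub_cancel]
      push_cast
      have hden' : 1 - x*c ≠ 0 := by rw [mul_comm]; exact hden
      field_simp
      ring
    · apply IntervalIntegrable.const_mul
      apply IntervalIntegrable.add
      apply IntervalIntegrable.sub
      · exact (integrable' hc (n+1) (n+2)).const_mul _
      · exact (integrable' hc n (n+1)).const_mul _
      · exact (integrable' hc n n).const_mul _
  rw [integral_const_mul] at key
  have h2 : (∫ x in (-1:ℝ)..1,
      (c^2 * ((1-x^2)^(n+1)/(1-c*x)^(n+2)) - 2 * ((1-x^2)^n/(1-c*x)^(n+1))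
        + 2 * ((1-x^2)^n/(1-c*x)^n)))
      = c^2 * Jint c (n+1) - 2 * Jint c n + 2 * Kint c n := by
    rw [integral_add, integral_sub, integral_const_mul, integral_const_mul, integral_const_mul]
    · rfl
    · exact (integrable' hc (n+1) (n+2)).const_mul _
    · exact (integrable' hc n (n+1)).const_mul _
    · exact ((integrable' hc (n+1) (n+2)).const_mul _).sub ((integrable' hc n (n+1)).const_mul _)
    · exact (integrable' hc n n).const_mul _
  rw [h2] at key
  have hne : ((n:ℝ)+1)/c ≠ 0 := by positivity
  have := (mul_eq_zero.mp key).resolve_left hne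
  linarith

lemma I2 {c : ℝ} (hc : |c| < 1) (n : ℕ) :
    ((n:ℝ)+1) * Jint c (n+1) + ((n:ℝ)+2) * Kint c (n+1) = (2*(n:ℝ)+2) * Jint c n := by
  have key : (∫ x in (-1:ℝ)..1,
      (((n:ℝ)+1) * ((1-x^2)^(n+1)/(1-c*x)^(n+2)) + ((n:ℝ)+2) * ((1-x^2)^(n+1)/(1-c*x)^(n+1))
        - (2*(n:ℝ)+2) * ((1-x^2)^n/(1-c*x)^(n+1)))) = 0 := by
    have main := integral_eq_sub_of_hasDerivAt
      (f := fun x : ℝ => x * ((1-x^2)^(n+1) / (1-c*x)^(n+1)))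
      (f' := fun x : ℝ =>
        ((n:ℝ)+1) * ((1-x^2)^(n+1)/(1-c*x)^(n+2)) + ((n:ℝ)+2) * ((1-x^2)^(n+1)/(1-c*x)^(n+1))
          - (2*(n:ℝ)+2) * ((1-x^2)^n/(1-c*x)^(n+1))) (a := -1) (b := 1) ?_ ?_
    · rw [main]; norm_num
    · intro x hx
      have hden := ne_of_gt (den_pos hc hx)
      have hq := hasDeriv_quot c (n+1) (n+1) hden
      have := (hasDerivAt_id x).mul hq
      refine this.congr_deriv ?_
      simp only [Nat.add_sub_cancel, id_eq]
      push_cast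
      simp only [pow_succ]
      field_simp
      ring
    · apply IntervalIntegrable.sub
      apply IntervalIntegrable.add
      · exact (integrable' hc (n+1) (n+2)).const_mul _
      · exact (integrable' hc (n+1) (n+1)).const_mul _
      · exact (integrable' hc n (n+1)).const_mul _
  rw [integral_sub, integral_add, integral_const_mul, integral_const_mul,
    integral_const_mul] at key
  · change ((n:ℝ)+1) * Jint c (n+1) + ((n:ℝ)+2) * Kint c (n+1)
      - (2*(n:ℝ)+2) * Jint c n = 0 at key
    linarith
  · exact (integrable' hc (n+1) (n+2)).const_mul _
  · exact (integrable' hc (n+1) (n+1)).const_mul _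
  · exact ((integrable' hc (n+1) (n+2)).const_mul _).add ((integrable' hc (n+1) (n+1)).const_mul _)
  · exact (integrable' hc n (n+1)).const_mul _

noncomputable def Eseq (c : ℝ) (n : ℕ) : ℝ := n.factorial * (c^2/2)^n * c * Jint c n

lemma Erec {c : ℝ} (hc : |c| < 1) (hc0 : c ≠ 0) (n : ℕ) :
    Eseq c (n+2) = (2*((n:ℝ)+2) - 1) * Eseq c (n+1) - ((n:ℝ)+1)^2 * c^2 * Eseq c n := by
  have h1 := I1 hc hc0 (n+1)
  have h2 := I2 hc n
  simp only [Eseq]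
  have hf2 : ((n+2).factorial : ℝ) = ((n:ℝ)+2) * ((n+1).factorial : ℝ) := by
    rw [Nat.factorial_succ]; push_cast; ring
  have hf1 : ((n+1).factorial : ℝ) = ((n:ℝ)+1) * (n.factorial : ℝ) := by
    rw [Nat.factorial_succ]; push_cast; ring
  rw [hf2, hf1]
  have hJ : (((n:ℝ))+2) * (c^2 * Jint c (n+2)) = 2*(2*(n:ℝ)+3) * Jint c (n+1)
      - 4*((n:ℝ)+1) * Jint c n := by nlinarith [h1, h2]
  have expand : ((n:ℝ)+2) * (((n:ℝ)+1) * (n.factorial:ℝ)) * (c^2/2)^(n+2) * c * Jint c (n+2)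
      = ((n:ℝ)+1) * (n.factorial:ℝ) * (c^2/2)^(n+1) * c / 2 * ((((n:ℝ))+2) * (c^2 * Jint c (n+2))) := by
    ring
  rw [expand, hJ]
  ring

lemma E0 {c : ℝ} (hc : |c| < 1) (hc0 : c ≠ 0) :
    Eseq c 0 = Real.log (1+c) - Real.log (1-c) := by
  have h1c : (0:ℝ) < 1 - c := by cases abs_lt.mp hc; linarith
  have h1c' : (0:ℝ) < 1 + c := by cases abs_lt.mp hc; linarith
  have key : Jint c 0 = (Real.log (1+c) - Real.log (1-c))/c := by
    have main := integral_eq_sub_of_hasDerivAt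
      (f := fun x : ℝ => -Real.log (1-c*x)/c)
      (f' := fun x : ℝ => (1-x^2)^0 / (1-c*x)^(0+1)) (a := -1) (b := 1) ?_ ?_
    · rw [Jint, main]
      rw [show (1:ℝ)-c*1 = 1-c by ring, show (1:ℝ)-c*(-1) = 1+c by ring]
      field_simp
      ring
    · intro x hx
      have hden := den_pos hc hx
      have hlog : HasDerivAt (fun x : ℝ => Real.log (1-c*x)) (-c/(1-c*x)) x := by
        have h2 : HasDerivAt (fun x : ℝ => 1 - c*x) (-c) x := by
          simpa using ((hasDerivAt_id x).const_mul c).const_sub 1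
        exact h2.log (ne_of_gt hden)
      have := (hlog.neg).div_const c
      refine this.congr_deriv ?_
      field_simp
      ring
    · exact integrable' hc 0 1
  simp [Eseq, key]
  field_simp

lemma E1 {c : ℝ} (hc : |c| < 1) (hc0 : c ≠ 0) :
    Eseq c 1 = Real.log (1+c) - Real.log (1-c) - 2*c := by
  have h1c : (0:ℝ) < 1 - c := by cases abs_lt.mp hc; linarith
  have h1c' : (0:ℝ) < 1 + c := by cases abs_lt.mp hc; linarith
  have key : Jint c 1 = ((-1)/c^3) * ((-(c^2-1)/(1-c) + 2*Real.log (1-c) - (1-c))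
      - (-(c^2-1)/(1+c) + 2*Real.log (1+c) - (1+c))) := by
    have main := integral_eq_sub_of_hasDerivAt
      (f := fun x : ℝ => ((-1)/c^3) * (-(c^2-1)/(1-c*x) + 2*Real.log (1-c*x) - (1-c*x)))
      (f' := fun x : ℝ => (1-x^2)^1 / (1-c*x)^(1+1)) (a := -1) (b := 1) ?_ ?_
    · rw [Jint, main]
      rw [show (1:ℝ)-c*1 = 1-c by ring, show (1:ℝ)-c*(-1) = 1+c by ring]
      ring
    · intro x hx
      have hden := den_pos hc hx
      have h2 : HasDerivAt (fun x : ℝ => 1 - c*x) (-c) x := by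
        simpa using ((hasDerivAt_id x).const_mul c).const_sub 1
      have hlog : HasDerivAt (fun x : ℝ => Real.log (1-c*x)) (-c/(1-c*x)) x :=
        h2.log (ne_of_gt hden)
      have hinv : HasDerivAt (fun x : ℝ => -(c^2-1)/(1-c*x))
          ((0 * (1-c*x) - (-(c^2-1)) * (-c))/(1-c*x)^2) x :=
        (hasDerivAt_const x (-(c^2-1))).div h2 (ne_of_gt hden)
      have := (((hinv.add (hlog.const_mul 2)).sub h2).const_mul ((-1)/c^3))
      refine this.congr_deriv ?_
      field_simp
      ring
    · exact integrable' hc 1 2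
  have expand : Eseq c 1 = (c^3/2) * Jint c 1 := by
    rw [Eseq, Nat.factorial_one]; push_cast; ring
  rw [expand, key]
  have e1 : -(c^2-1)/(1-c) = 1+c := by field_simp; ring
  have e2 : -(c^2-1)/(1+c) = 1-c := by field_simp; ring
  rw [e1, e2]
  field_simp
  ring

noncomputable def Tint (s : ℝ) (n : ℕ) : ℝ := ∫ θ in (0:ℝ)..Real.pi, (1+s*Real.cos θ)^n

lemma Tcont (s : ℝ) (n : ℕ) : Continuous (fun θ : ℝ => (1+s*Real.cos θ)^n) := by fun_prop

lemma T0 (s : ℝ) : Tint s 0 = Real.pi := by simp [Tint]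

lemma T1 (s : ℝ) : Tint s 1 = Real.pi := by
  simp [Tint]

lemma Trec (s : ℝ) (n : ℕ) :
    ((n:ℝ)+2) * Tint s (n+2) = (2*((n:ℝ)+1)+1) * Tint s (n+1) - ((n:ℝ)+1)*(1-s^2) * Tint s n := by
  have key : (∫ θ in (0:ℝ)..Real.pi, ((((n:ℝ))+2) * (1+s*Real.cos θ)^(n+2)
      - (2*((n:ℝ)+1)+1) * (1+s*Real.cos θ)^(n+1) + ((n:ℝ)+1)*(1-s^2) * (1+s*Real.cos θ)^n)) = 0 := by
    have main := integral_eq_sub_of_hasDerivAt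
      (f := fun θ : ℝ => s * (Real.sin θ * (1+s*Real.cos θ)^(n+1)))
      (f' := fun θ : ℝ => ((((n:ℝ))+2) * (1+s*Real.cos θ)^(n+2)
        - (2*((n:ℝ)+1)+1) * (1+s*Real.cos θ)^(n+1) + ((n:ℝ)+1)*(1-s^2) * (1+s*Real.cos θ)^n))
      (a := 0) (b := Real.pi) ?_ ?_
    · rw [main]; simp [Real.sin_pi]
    · intro x hx
      have h1 : HasDerivAt (fun θ : ℝ => 1+s*Real.cos θ) (s * (-Real.sin x)) x := by
        simpa using ((Real.hasDerivAt_cos x).const_mul s).const_add 1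
      have h2 := ((Real.hasDerivAt_sin x).mul (h1.pow (n+1))).const_mul s
      refine h2.congr_deriv ?_
      simp only [Nat.add_sub_cancel, Pi.pow_apply]
      push_cast
      linear_combination (-(s^2*((n:ℝ)+1)*(1+s*Real.cos x)^n)) * (Real.sin_sq_add_cos_sq x)
    · apply IntervalIntegrable.add
      apply IntervalIntegrable.sub
      · exact ((Tcont s (n+2)).intervalIntegrable _ _).const_mul _
      · exact ((Tcont s (n+1)).intervalIntegrable _ _).const_mul _
      · exact ((Tcont s n).intervalIntegrable _ _).const_mul _
  rw [integral_add, integral_sub, integral_const_mul, integral_const_mul,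
    integral_const_mul] at key
  · change ((n:ℝ)+2) * Tint s (n+2) - (2*((n:ℝ)+1)+1) * Tint s (n+1)
      + ((n:ℝ)+1)*(1-s^2) * Tint s n = 0 at key
    linarith
  · exact ((Tcont s (n+2)).intervalIntegrable _ _).const_mul _
  · exact ((Tcont s (n+1)).intervalIntegrable _ _).const_mul _
  · exact (((Tcont s (n+2)).intervalIntegrable _ _).const_mul _).sub
      (((Tcont s (n+1)).intervalIntegrable _ _).const_mul _)
  · exact ((Tcont s n).intervalIntegrable _ _).const_mul _

lemma Tlow {s : ℝ} (hs0 : 0 < s) (hs1 : s < 1) (n : ℕ) :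
    Real.pi/3 * (1+s/2)^n ≤ Tint s n := by
  have hpi := Real.pi_pos
  have h3 : (0:ℝ) < Real.pi/3 := by linarith
  have h3pi : Real.pi/3 ≤ Real.pi := by linarith
  have hi1 : IntervalIntegrable (fun θ : ℝ => (1+s*Real.cos θ)^n)
      MeasureTheory.volume 0 (Real.pi/3) := (Tcont s n).intervalIntegrable _ _
  have hi2 : IntervalIntegrable (fun θ : ℝ => (1+s*Real.cos θ)^n)
      MeasureTheory.volume (Real.pi/3) Real.pi := (Tcont s n).intervalIntegrable _ _
  have hsplit := integral_add_adjacent_intervals (μ := MeasureTheory.volume) hi1 hi2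
  have h1 : Real.pi/3 * (1+s/2)^n ≤ ∫ θ in (0:ℝ)..(Real.pi/3), (1+s*Real.cos θ)^n := by
    have := integral_mono_on (a := (0:ℝ)) (b := Real.pi/3) (μ := MeasureTheory.volume)
      (f := fun _ : ℝ => (1+s/2)^n) (g := fun θ : ℝ => (1+s*Real.cos θ)^n)
      (le_of_lt h3) (intervalIntegrable_const) hi1 ?_
    · simpa using this
    · intro x hx
      have hcos : (1:ℝ)/2 ≤ Real.cos x := by
        rw [show (1:ℝ)/2 = Real.cos (Real.pi/3) by rw [Real.cos_pi_div_three]]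
        apply Real.cos_le_cos_of_nonneg_of_le_pi hx.1 h3pi hx.2
      apply pow_le_pow_left₀ (by linarith) (by nlinarith)
  have h2 : (0:ℝ) ≤ ∫ θ in (Real.pi/3)..Real.pi, (1+s*Real.cos θ)^n := by
    apply intervalIntegral.integral_nonneg h3pi
    intro x hx
    have := Real.neg_one_le_cos x
    have hnn : (0:ℝ) ≤ 1 + s*Real.cos x := by nlinarith
    exact pow_nonneg hnn n
  rw [Tint, ← hsplit]
  linarith

lemma Ebound {c : ℝ} (hc : |c| < 1) (n : ℕ) :
    |Eseq c n| ≤ (n.factorial : ℝ) * (2*|c|/(1-|c|)) * (1-Real.sqrt (1-c^2))^n := by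
  set s := Real.sqrt (1-c^2) with hs
  have hc2 : c^2 < 1 := by nlinarith [abs_nonneg c, sq_abs c]
  have hs2 : s^2 = 1 - c^2 := Real.sq_sqrt (by linarith)
  have hs0 : 0 ≤ s := Real.sqrt_nonneg _
  have hs1 : s ≤ 1 := by nlinarith
  have key : ∀ x ∈ Set.uIoc (-1:ℝ) 1,
      ‖(c^2/2)^n * ((1-x^2)^n / (1-c*x)^(n+1))‖ ≤ (1-s)^n * (1/(1-|c|)) := by
    intro x hx
    have hx' : x ∈ Set.uIcc (-1:ℝ) 1 := Set.uIoc_subset_uIcc hx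
    have hxabs : |x| ≤ 1 := by
      rw [Set.uIcc_of_le (by norm_num : (-1:ℝ) ≤ 1)] at hx'
      exact abs_le.mpr ⟨hx'.1, hx'.2⟩
    have hden := den_pos hc hx'
    have hx2 : 0 ≤ 1 - x^2 := by nlinarith [sq_abs x, abs_nonneg x]
    have hden' : 1 - |c| ≤ 1 - c*x := by
      have : c*x ≤ |c| := by
        calc c*x ≤ |c*x| := le_abs_self _
        _ = |c| * |x| := abs_mul c x
        _ ≤ |c| := by nlinarith [abs_nonneg c]
      linarith
    have hg : c^2*(1-x^2)/(2*(1-c*x)) ≤ 1 - s := by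
      rw [div_le_iff₀ (by linarith)]
      have hid : (1+s) * (2*(1-s)*(1-c*x) - c^2*(1-x^2)) = (1-s)*((1+s)*x-c)^2 := by
        linear_combination (-(2-(1+s)*x^2)) * hs2
      nlinarith [mul_nonneg (by linarith : (0:ℝ) ≤ 1-s) (sq_nonneg ((1+s)*x-c))]
    have hg0 : 0 ≤ c^2*(1-x^2)/(2*(1-c*x)) := by positivity
    have hrw : (c^2/2)^n * ((1-x^2)^n / (1-c*x)^(n+1))
        = (c^2*(1-x^2)/(2*(1-c*x)))^n * (1/(1-c*x)) := by
      rw [div_pow, div_pow, mul_pow, mul_pow, pow_succ]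
      field_simp
      try ring
      try tauto
    rw [hrw, Real.norm_eq_abs, abs_mul, abs_of_nonneg (pow_nonneg hg0 n),
      abs_of_nonneg (by positivity : (0:ℝ) ≤ 1/(1-c*x))]
    have h1s : (0:ℝ) ≤ 1 - s := by linarith
    apply mul_le_mul (pow_le_pow_left₀ hg0 hg n) _ (by positivity) (pow_nonneg h1s n)
    apply div_le_div_of_nonneg_left (by norm_num) (by linarith [abs_nonneg c]) hden'
  have hnorm : ‖(c^2/2)^n * Jint c n‖ ≤ ((1-s)^n * (1/(1-|c|))) * |1 - (-1:ℝ)| := by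
    rw [show (c^2/2)^n * Jint c n
        = ∫ x in (-1:ℝ)..1, (c^2/2)^n * ((1-x^2)^n / (1-c*x)^(n+1)) by
      rw [Jint, intervalIntegral.integral_const_mul]]
    exact intervalIntegral.norm_integral_le_of_norm_le_const key
  have habs : |Eseq c n| = (n.factorial : ℝ) * |c| * |(c^2/2)^n * Jint c n| := by
    rw [Eseq, show (n.factorial:ℝ) * (c^2/2)^n * c * Jint c n
        = ((n.factorial:ℝ) * c) * ((c^2/2)^n * Jint c n) from by ring,
      abs_mul, abs_mul, abs_of_nonneg (by positivity : (0:ℝ) ≤ (n.factorial:ℝ))]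
  rw [habs]
  rw [Real.norm_eq_abs] at hnorm
  have h2 : |1 - (-1:ℝ)| = 2 := by norm_num
  rw [h2] at hnorm
  calc (n.factorial : ℝ) * |c| * |(c^2/2)^n * Jint c n|
      ≤ (n.factorial : ℝ) * |c| * ((1-s)^n * (1/(1-|c|)) * 2) := by
        apply mul_le_mul_of_nonneg_left hnorm (by positivity)
  _ = (n.factorial : ℝ) * (2*|c|/(1-|c|)) * (1-s)^n := by
        field_simp

/-- Continued fraction expansion of `ln λ` (Lemma 3.4 (i)): with `φ = (1-λ)/(1+λ)`,
the convergents of `[0; -2φ/1, -φ²/3, -2²φ²/5, …, -n²φ²/(2n+1), …]`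
converge to `ln λ`.  Indices are shifted by one: `p 0 = p_{-1} = 1`, `p 1 = p₀ = a₀`, etc. -/
theorem cf_log (lam : ℝ) (hlam : 0 < lam) (hlam1 : lam ≠ 1)
    (phi : ℝ) (hphi : phi = (1 - lam) / (1 + lam))
    (a b p pq : ℕ → ℝ)
    (ha0 : a 0 = 0)
    (hb1 : b 1 = -2 * phi)
    (hb : ∀ k : ℕ, 2 ≤ k → b k = -((k : ℝ) - 1) ^ 2 * phi ^ 2)
    (ha : ∀ k : ℕ, 1 ≤ k → a k = 2 * (k : ℝ) - 1)
    (hp0 : p 0 = 1) (hp1 : p 1 = a 0)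
    (hq0 : pq 0 = 0) (hq1 : pq 1 = 1)
    (hp : ∀ k, 1 ≤ k → p (k + 1) = a k * p k + b k * p (k - 1))
    (hpq : ∀ k, 1 ≤ k → pq (k + 1) = a k * pq k + b k * pq (k - 1)) :
    Tendsto (fun n => p (n + 1) / pq (n + 1)) atTop (nhds (Real.log lam)) := by
  have hlampos : (0:ℝ) < 1 + lam := by linarith
  have hphi0 : phi ≠ 0 := by
    rw [hphi]
    intro h
    have := div_eq_zero_iff.mp h
    rcases this with h' | h'
    · exact hlam1 (by linarith)
    · linarith
  have habs : |phi| < 1 := by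
    rw [abs_lt, hphi]
    constructor
    · rw [lt_div_iff₀ hlampos]; linarith
    · rw [div_lt_one hlampos]; linarith
  have hphi2 : phi^2 < 1 := by nlinarith [abs_nonneg phi, sq_abs phi]
  set s : ℝ := Real.sqrt (1 - phi^2) with hsdef
  have hs2 : s^2 = 1 - phi^2 := Real.sq_sqrt (by linarith)
  have hs0 : 0 < s := Real.sqrt_pos.mpr (by linarith)
  have hs1 : s < 1 := by
    have hphi2pos : 0 < phi^2 := by positivity
    nlinarith [hs2, hs0, sq_nonneg (s-1)]
  have hpi := Real.pi_pos
  set L : ℝ := Real.log lam with hL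
  -- E values in terms of L
  have hkey : 1 - phi = lam * (1 + phi) := by
    rw [hphi]; field_simp; ring
  have hlog : Real.log (1 - phi) = L + Real.log (1 + phi) := by
    rw [hkey, Real.log_mul (ne_of_gt hlam) (by nlinarith [abs_lt.mp habs] : (1:ℝ)+phi ≠ 0)]
  have hE0 : Eseq phi 0 = -L := by
    rw [E0 habs hphi0, hlog]; ring
  have hE1 : Eseq phi 1 = -L - 2*phi := by
    rw [E1 habs hphi0, hlog]; ring
  -- the main induction
  have main : ∀ n : ℕ,
      ((p (n+1) - L * pq (n+1) = Eseq phi n) ∧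
        pq (n+1) = (n.factorial : ℝ) * Tint s n / Real.pi) ∧
      ((p (n+2) - L * pq (n+2) = Eseq phi (n+1)) ∧
        pq (n+2) = ((n+1).factorial : ℝ) * Tint s (n+1) / Real.pi) := by
    intro n
    induction n with
    | zero =>
      have hpq1 := hpq 1 le_rfl
      have hp1' := hp 1 le_rfl
      norm_num at hpq1 hp1'
      rw [hq0, hq1, ha 1 le_rfl, hb1] at hpq1
      rw [hp0, hp1, ha0, ha 1 le_rfl, hb1] at hp1'
      refine ⟨⟨?_, ?_⟩, ?_, ?_⟩
      · show p 1 - L * pq 1 = Eseq phi 0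
        rw [hp1, ha0, hq1, hE0]; ring
      · show pq 1 = ((Nat.factorial 0 : ℕ):ℝ) * Tint s 0 / Real.pi
        rw [hq1, T0, Nat.factorial_zero]; field_simp; norm_num
      · show p 2 - L * pq 2 = Eseq phi 1
        rw [hp1', hpq1, hE1]; push_cast; ring
      · show pq 2 = ((Nat.factorial 1 : ℕ):ℝ) * Tint s 1 / Real.pi
        rw [hpq1, T1, Nat.factorial_one]; push_cast; field_simp; norm_num
    | succ m ih =>
      have hp' := hp (m+2) (by omega)
      have hpq' := hpq (m+2) (by omega)
      simp only [show m+2-1 = m+1 by omega] at hp' hpq'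
      have hbv := hb (m+2) (by omega)
      have hav := ha (m+2) (by omega)
      push_cast at hbv hav
      have e1 := ih.1.1
      have e2 := ih.2.1
      have q1 := ih.1.2
      have q2 := ih.2.2
      rw [show m+1+1 = m+2 from by omega] at e2 q2
      have hF1 : (((m+1).factorial : ℕ):ℝ) = ((m:ℝ)+1)*((m.factorial : ℕ):ℝ) := by
        rw [Nat.factorial_succ]; push_cast; ring
      have hF2 : (((m+2).factorial : ℕ):ℝ) = ((m:ℝ)+2)*(((m:ℝ)+1)*((m.factorial : ℕ):ℝ)) := by
        rw [show m+2 = m+1+1 from by omega, Nat.factorial_succ, Nat.factorial_succ]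
        push_cast; ring
      refine ⟨ih.2, ?_, ?_⟩
      · have hrec := Erec habs hphi0 m
        show p (m+2+1) - L * pq (m+2+1) = Eseq phi (m+2)
        rw [hp', hpq', hav, hbv, hrec]
        push_cast
        linear_combination (2*((m:ℝ)+2)-1) * e2 - (((m:ℝ)+1)^2*phi^2) * e1
      · have hT := Trec s m
        show pq (m+2+1) = (((m+2).factorial : ℕ):ℝ) * Tint s (m+2) / Real.pi
        rw [hpq', hav, hbv, q1, q2]
        simp only [hF2, hF1]
        push_cast
        linear_combination (-(((m:ℝ)+1))*((m.factorial : ℕ):ℝ)/Real.pi) * hT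
          - (((m:ℝ)+1)^2*((m.factorial : ℕ):ℝ)*Tint s m/Real.pi) * hs2
  -- conclusion
  set r : ℝ := (1-s)/(1+s/2) with hrdef
  have hr0 : 0 ≤ r := by
    apply div_nonneg <;> linarith
  have hr1 : r < 1 := by
    rw [hrdef, div_lt_one (by linarith)]
    linarith
  set D : ℝ := 3 * (2*|phi|/(1-|phi|)) with hDdef
  have hD0 : 0 ≤ D := by
    have := abs_nonneg phi
    have : 1 - |phi| > 0 := by linarith
    positivity
  have hbound : ∀ n : ℕ, dist (p (n+1) / pq (n+1)) L ≤ D * r^n := by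
    intro n
    have hC := (main n).1
    have hTlow := Tlow hs0 hs1 n
    have hfacpos : (0:ℝ) < (n.factorial : ℕ) := by positivity
    have hTpos : 0 < Tint s n := lt_of_lt_of_le (by positivity) hTlow
    have hpqpos : 0 < pq (n+1) := by
      rw [hC.2]; positivity
    have hqlow : (n.factorial : ℝ) * (1+s/2)^n / 3 ≤ pq (n+1) := by
      rw [hC.2]
      rw [div_le_div_iff₀ (by norm_num) hpi]
      calc (n.factorial : ℝ) * (1+s/2)^n * Real.pi
          = (n.factorial : ℝ) * (Real.pi/3 * (1+s/2)^n) * 3 := by ring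
        _ ≤ (n.factorial : ℝ) * Tint s n * 3 := by
            apply mul_le_mul_of_nonneg_right _ (by norm_num)
            exact mul_le_mul_of_nonneg_left hTlow (by positivity)
    have hdist : dist (p (n+1) / pq (n+1)) L = |Eseq phi n| / pq (n+1) := by
      rw [Real.dist_eq, show p (n+1) / pq (n+1) - L = (p (n+1) - L * pq (n+1)) / pq (n+1) from by
        field_simp, hC.1, abs_div, abs_of_pos hpqpos]
    rw [hdist]
    have hEb := Ebound habs n
    rw [← hsdef] at hEb
    have hnum0 : (0:ℝ) ≤ (n.factorial : ℝ) * (2*|phi|/(1-|phi|)) * (1-s)^n := by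
      have h1 : (0:ℝ) < 1 - |phi| := by linarith
      have h2 : (0:ℝ) ≤ 1 - s := by linarith
      positivity
    have hdl : (0:ℝ) < (n.factorial : ℝ) * (1+s/2)^n / 3 := by positivity
    calc |Eseq phi n| / pq (n+1)
        ≤ ((n.factorial : ℝ) * (2*|phi|/(1-|phi|)) * (1-s)^n) /
          ((n.factorial : ℝ) * (1+s/2)^n / 3) := by
          exact div_le_div₀ hnum0 hEb hdl hqlow
      _ = (2*|phi|/(1-|phi|) * (1-s)^n) / ((1+s/2)^n / 3) := by
          have h1 : ((n.factorial : ℕ):ℝ) ≠ 0 := ne_of_gt hfacpos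
          rw [show (n.factorial : ℝ) * (2*|phi|/(1-|phi|)) * (1-s)^n
              = (n.factorial : ℝ) * (2*|phi|/(1-|phi|) * (1-s)^n) from by ring,
            show (n.factorial : ℝ) * (1+s/2)^n / 3
              = (n.factorial : ℝ) * ((1+s/2)^n / 3) from by ring,
            mul_div_mul_left _ _ h1]
      _ = D * r^n := by
          rw [hDdef, hrdef, div_pow]
          have h2 : (1+s/2)^n ≠ 0 := by positivity
          have h3 : (1:ℝ) - |phi| ≠ 0 := by
            have : |phi| < 1 := habs
            intro h; rw [sub_eq_zero] at h; linarith
          field_simp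
  have htend : Filter.Tendsto (fun n : ℕ => D * r^n) Filter.atTop (nhds 0) := by
    have := (tendsto_pow_atTop_nhds_zero_of_lt_one hr0 hr1).const_mul D
    simpa using this
  rw [tendsto_iff_dist_tendsto_zero]
  exact squeeze_zero (fun n => dist_nonneg) hbound htend
end

section
/- Let A and B be positive definite m×m real matrices and n a positive integer. Then S_{2n}(A|B) = (B A^{-1})^n · S(A|B) · (A^{-1} B)^n and S_{2n+1}(A|B) = (B A^{-1})^n · S_1(A|B) · (A^{-1} B)^n. -/
set_option maxHeartbeats 1000000


/-- The positive semidefinite square root, as `Matrix.PosSemidef.sqrt` was defined in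
the older Mathlib (removed since). -/
noncomputable def posSemidefSqrt {m : ℕ} {M : Matrix (Fin m) (Fin m) ℝ}
    (hM : M.PosSemidef) : Matrix (Fin m) (Fin m) ℝ :=
  hM.1.eigenvectorUnitary.1 * Matrix.diagonal ((↑) ∘ Real.sqrt ∘ hM.1.eigenvalues) *
    (star hM.1.eigenvectorUnitary : Matrix (Fin m) (Fin m) ℝ)

/-- Matrix logarithm of a Hermitian (e.g. positive definite) real matrix,
via the spectral functional calculus. -/
noncomputable def matLog {m : ℕ} {M : Matrix (Fin m) (Fin m) ℝ}
    (hM : M.IsHermitian) : Matrix (Fin m) (Fin m) ℝ :=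
  hM.cfc Real.log

private lemma posSemidefSqrt_mul_self_aux {m : ℕ} {M : Matrix (Fin m) (Fin m) ℝ}
    (hM : M.PosSemidef) : posSemidefSqrt hM * posSemidefSqrt hM = M := by
  have hU : (star hM.1.eigenvectorUnitary : Matrix (Fin m) (Fin m) ℝ) * hM.1.eigenvectorUnitary.1 = 1 :=
    Unitary.star_mul_self_of_mem hM.1.eigenvectorUnitary.2
  conv_rhs => rw [hM.1.spectral_theorem, Unitary.conjStarAlgAut_apply]
  unfold posSemidefSqrt
  calc _ = hM.1.eigenvectorUnitary.1 * (Matrix.diagonal ((↑) ∘ Real.sqrt ∘ hM.1.eigenvalues) *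
        ((star hM.1.eigenvectorUnitary : Matrix (Fin m) (Fin m) ℝ) * hM.1.eigenvectorUnitary.1) *
        Matrix.diagonal ((↑) ∘ Real.sqrt ∘ hM.1.eigenvalues)) *
        (star hM.1.eigenvectorUnitary : Matrix (Fin m) (Fin m) ℝ) := by simp only [mul_assoc]
    _ = _ := by
      rw [hU, mul_one, Matrix.diagonal_mul_diagonal]
      congr 3
      funext i
      simp [Real.mul_self_sqrt (hM.eigenvalues_nonneg i)]

private lemma conj_pow_aux {α : Type*} [Monoid α] (r s x : α)
    (hrs : r * s = 1) (hsr : s * r = 1) (n : ℕ) :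
    (r * x * s) ^ n = r * x ^ n * s := by
  induction n with
  | zero => simp [hrs]
  | succ k ih =>
    rw [pow_succ, ih, pow_succ]
    calc r * x ^ k * s * (r * x * s) = r * x ^ k * (s * r) * x * s := by
          simp only [mul_assoc]
        _ = r * (x ^ k * x) * s := by rw [hsr]; simp only [mul_assoc, mul_one]

/-- Lemma 3.5 (ii)-(iii): for positive definite `A`, `B` and a positive integer `n`,
`S_{2n}(A|B) = (B A⁻¹)ⁿ S(A|B) (A⁻¹ B)ⁿ` and
`S_{2n+1}(A|B) = (B A⁻¹)ⁿ S₁(A|B) (A⁻¹ B)ⁿ`, where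
`S_q(A|B) = A^{1/2} M^q (ln M) A^{1/2}` with `M = A^{-1/2} B A^{-1/2}`,
`S(A|B) = S₀(A|B)` and `S₁(A|B) = A^{1/2} M (ln M) A^{1/2}`. -/
theorem entropy_even_odd_power {m : ℕ} (A B : Matrix (Fin m) (Fin m) ℝ)
    (hA : A.PosDef) (hB : B.PosDef) (n : ℕ) (hn : 0 < n)
    (hM : ((posSemidefSqrt hA.posSemidef)⁻¹ * B * (posSemidefSqrt hA.posSemidef)⁻¹).IsHermitian) :
    posSemidefSqrt hA.posSemidef *
        (((posSemidefSqrt hA.posSemidef)⁻¹ * B * (posSemidefSqrt hA.posSemidef)⁻¹) ^ (2 * n) * matLog hM) *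
        posSemidefSqrt hA.posSemidef =
      (B * A⁻¹) ^ n * (posSemidefSqrt hA.posSemidef * matLog hM * posSemidefSqrt hA.posSemidef) * (A⁻¹ * B) ^ n ∧
    posSemidefSqrt hA.posSemidef *
        (((posSemidefSqrt hA.posSemidef)⁻¹ * B * (posSemidefSqrt hA.posSemidef)⁻¹) ^ (2 * n + 1) * matLog hM) *
        posSemidefSqrt hA.posSemidef =
      (B * A⁻¹) ^ n *
        (posSemidefSqrt hA.posSemidef *
          (((posSemidefSqrt hA.posSemidef)⁻¹ * B * (posSemidefSqrt hA.posSemidef)⁻¹) * matLog hM) *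
          posSemidefSqrt hA.posSemidef) * (A⁻¹ * B) ^ n := by
  set R := posSemidefSqrt hA.posSemidef with hR
  set M := R⁻¹ * B * R⁻¹ with hMdef
  set L := matLog hM with hL
  have hRR : R * R = A := posSemidefSqrt_mul_self_aux hA.posSemidef
  have hRdet : IsUnit R.det := by
    have : R.det * R.det = A.det := by rw [← Matrix.det_mul, hRR]
    have hApos := hA.det_pos
    rw [← this] at hApos
    exact (by nlinarith : R.det ≠ 0).isUnit
  have hRinv : R * R⁻¹ = 1 := Matrix.mul_nonsing_inv R hRdet
  have hRinv' : R⁻¹ * R = 1 := Matrix.nonsing_inv_mul R hRdet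
  have hAinv : A⁻¹ = R⁻¹ * R⁻¹ := by rw [← hRR, Matrix.mul_inv_rev]
  -- (B A⁻¹)ⁿ = R Mⁿ R⁻¹
  have hBA : B * A⁻¹ = R * M * R⁻¹ := by
    rw [hAinv, hMdef]
    calc B * (R⁻¹ * R⁻¹) = (R * R⁻¹) * B * R⁻¹ * R⁻¹ := by rw [hRinv]; simp [Matrix.mul_assoc]
      _ = R * (R⁻¹ * B * R⁻¹) * R⁻¹ := by simp [Matrix.mul_assoc]
  have hAB : A⁻¹ * B = R⁻¹ * M * R := by
    rw [hAinv, hMdef]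
    calc R⁻¹ * R⁻¹ * B = R⁻¹ * R⁻¹ * B * (R⁻¹ * R) := by rw [hRinv']; simp
      _ = R⁻¹ * (R⁻¹ * B * R⁻¹) * R := by simp [Matrix.mul_assoc]
  have hBApow : (B * A⁻¹) ^ n = R * M ^ n * R⁻¹ := by
    rw [hBA]; exact conj_pow_aux R R⁻¹ M hRinv hRinv' n
  have hABpow : (A⁻¹ * B) ^ n = R⁻¹ * M ^ n * R := by
    rw [hAB]; exact conj_pow_aux R⁻¹ R M hRinv' hRinv n
  -- L commutes with M
  have hMsa : IsSelfAdjoint M := hM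
  have hLc : L = cfc Real.log M := (Matrix.IsHermitian.cfc_eq hM Real.log).symm
  have hcomm : Commute M L := by
    rw [hLc]
    have h := cfc_commute_cfc (id : ℝ → ℝ) Real.log M
    rwa [cfc_id ℝ M] at h
  have hcommn : Commute (M ^ n) L := hcomm.pow_left n
  have sandaux : ∀ X : Matrix (Fin m) (Fin m) ℝ,
      (R * M ^ n * R⁻¹) * (R * X * R) * (R⁻¹ * M ^ n * R) = R * (M ^ n * X * M ^ n) * R := by
    intro X
    calc (R * M ^ n * R⁻¹) * (R * X * R) * (R⁻¹ * M ^ n * R)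
        = R * M ^ n * ((R⁻¹ * R) * (X * ((R * R⁻¹) * (M ^ n * R)))) := by
          simp only [Matrix.mul_assoc]
      _ = R * (M ^ n * X * M ^ n) * R := by
          rw [hRinv, hRinv']; simp only [Matrix.one_mul, Matrix.mul_assoc]
  have keyeven : M ^ (2 * n) * L = M ^ n * L * M ^ n := by
    rw [two_mul, pow_add]
    calc M ^ n * M ^ n * L = M ^ n * (M ^ n * L) := mul_assoc _ _ _
      _ = M ^ n * (L * M ^ n) := by rw [hcommn.eq]
      _ = M ^ n * L * M ^ n := (mul_assoc _ _ _).symm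
  have hcML : Commute (M ^ n) (M * L) := ((Commute.refl M).pow_left n).mul_right hcommn
  have keyodd : M ^ (2 * n + 1) * L = M ^ n * (M * L) * M ^ n := by
    rw [two_mul, pow_succ, pow_add]
    calc M ^ n * M ^ n * M * L = M ^ n * (M ^ n * (M * L)) := by simp only [mul_assoc]
      _ = M ^ n * ((M * L) * M ^ n) := by rw [hcML.eq]
      _ = M ^ n * (M * L) * M ^ n := (mul_assoc _ _ _).symm
  constructor
  · rw [keyeven, ← sandaux L, hBApow, hABpow]
  · rw [keyodd, ← sandaux (M * L), hBApow, hABpow]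
end
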